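/- arXiv:1401.0295 — 2 statements merged into one kernel-verified Lean document; each statement's English description precedes it below -/
import Mathlib

section
/- Let d ∈ ℕ and define the taming map ψ : ℝ^d → ℝ^d by ψ(v) = v/(1 + ‖v‖²). Then for every z ∈ ℝ^d and every u ∈ ℝ^d with ‖u‖ ≤ 1 it holds that ‖ψ''(z)(u, u)‖ ≤ 14‖z‖/(1 + ‖z‖²)². -/
/-!
With `c = (1 + ‖z‖²)⁻¹`, the derivative of `ψ` is `ψ'(z) = c • id - 2c² ⟪z, ·⟫ • z`, and
differentiating once more gives
`ψ''(z)(u, u) = -4c² ⟪z, u⟫ • u + (8c³ ⟪z, u⟫² - 2c² ‖u‖²) • z`.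
For `‖u‖ ≤ 1` we have `|⟪z, u⟫| ≤ ‖z‖` and `c ‖z‖² ≤ 1`, so the three terms have norm at most
`4c²‖z‖`, `8c²‖z‖` and `2c²‖z‖`.
-/

noncomputable def tamingMap (d : ℕ) (v : EuclideanSpace ℝ (Fin d)) : EuclideanSpace ℝ (Fin d) :=
  (1 + ‖v‖ ^ 2)⁻¹ • v

open ContinuousLinearMap
open scoped RealInnerProductSpace

section InnerProductSpace

variable {E : Type*} [NormedAddCommGroup E] [InnerProductSpace ℝ E]

theorem hasFDerivAt_inv_one_add_norm_sq (z : E) :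
    HasFDerivAt (fun v : E => (1 + ‖v‖ ^ 2)⁻¹) ((-2 * (1 + ‖z‖ ^ 2)⁻¹ ^ 2) • innerSL ℝ z) z := by
  have hN : HasFDerivAt (fun v : E => 1 + ‖v‖ ^ 2) (2 • innerSL ℝ z) z := by
    simpa using ((hasFDerivAt_id z).norm_sq).const_add 1
  refine ((hasDerivAt_inv (by positivity)).comp_hasFDerivAt z hN).congr_fderiv ?_
  ext u
  simp
  ring

noncomputable def tamingFDeriv (z : E) : E →L[ℝ] E :=
  (1 + ‖z‖ ^ 2)⁻¹ • ContinuousLinearMap.id ℝ E -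
    (2 * (1 + ‖z‖ ^ 2)⁻¹ ^ 2) • (innerSL ℝ z).smulRight z

theorem hasFDerivAt_taming (z : E) :
    HasFDerivAt (fun v : E => (1 + ‖v‖ ^ 2)⁻¹ • v) (tamingFDeriv z) z := by
  refine ((hasFDerivAt_inv_one_add_norm_sq z).smul (hasFDerivAt_id z)).congr_fderiv ?_
  ext u
  simp [tamingFDeriv]
  module

theorem fderiv_tamingFDeriv_apply_apply (z u : E) :
    fderiv ℝ tamingFDeriv z u u =
      (-4 * (1 + ‖z‖ ^ 2)⁻¹ ^ 2 * ⟪z, u⟫) • u +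
        (8 * (1 + ‖z‖ ^ 2)⁻¹ ^ 3 * ⟪z, u⟫ ^ 2 - 2 * (1 + ‖z‖ ^ 2)⁻¹ ^ 2 * ‖u‖ ^ 2) • z := by
  have hc := hasFDerivAt_inv_one_add_norm_sq z
  have hB : HasFDerivAt (fun v : E => (innerSL ℝ v).smulRight v) _ z :=
    ((smulRightL ℝ E E).comp (innerSL ℝ)).hasFDerivAt.clm_apply (hasFDerivAt_id z)
  have hG : HasFDerivAt tamingFDeriv _ z :=
    (hc.smul_const (ContinuousLinearMap.id ℝ E)).sub (((hc.pow 2).const_mul 2).smul hB)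
  rw [hG.fderiv]
  simp only [sub_apply, add_apply, smul_apply, smulRight_apply, comp_apply, coe_id', id_eq,
    flip_apply, innerSL_apply_apply]
  dsimp [smulRightL]
  rw [real_inner_self_eq_norm_sq]
  module

theorem norm_fderiv_tamingFDeriv_apply_apply_le (z : E) {u : E} (hu : ‖u‖ ≤ 1) :
    ‖fderiv ℝ tamingFDeriv z u u‖ ≤ 14 * ‖z‖ / (1 + ‖z‖ ^ 2) ^ 2 := by
  rw [fderiv_tamingFDeriv_apply_apply, div_eq_mul_inv, ← inv_pow]
  set c := (1 + ‖z‖ ^ 2)⁻¹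
  have hc : 0 ≤ c := by positivity
  have hcz : c * ‖z‖ ^ 2 ≤ 1 := by
    rw [inv_mul_le_one₀ (by positivity)]
    linarith
  have hzu : |⟪z, u⟫| ≤ ‖z‖ :=
    (abs_real_inner_le_norm z u).trans (mul_le_of_le_one_right (norm_nonneg z) hu)
  have hzu_sq : ⟪z, u⟫ ^ 2 ≤ ‖z‖ ^ 2 := sq_le_sq' (abs_le.mp hzu).1 (abs_le.mp hzu).2
  have hu_sq : ‖u‖ ^ 2 ≤ 1 := pow_le_one₀ (norm_nonneg u) hu
  have h_coeff_u : ‖-4 * c ^ 2 * ⟪z, u⟫‖ ≤ 4 * c ^ 2 * ‖z‖ := by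
    rw [Real.norm_eq_abs, abs_mul, abs_of_nonpos (by nlinarith)]
    nlinarith
  have h_coeff_z : ‖8 * c ^ 3 * ⟪z, u⟫ ^ 2 - 2 * c ^ 2 * ‖u‖ ^ 2‖ ≤ 10 * c ^ 2 := by
    have hct : c * ⟪z, u⟫ ^ 2 ≤ 1 := (mul_le_mul_of_nonneg_left hzu_sq hc).trans hcz
    rw [Real.norm_eq_abs, abs_le]
    constructor <;> nlinarith [mul_le_mul_of_nonneg_left hct (sq_nonneg c),
      mul_le_mul_of_nonneg_left hu_sq (sq_nonneg c), sq_nonneg (c * ⟪z, u⟫), sq_nonneg (c * ‖u‖)]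
  calc _ ≤ ‖-4 * c ^ 2 * ⟪z, u⟫‖ * ‖u‖ + ‖8 * c ^ 3 * ⟪z, u⟫ ^ 2 - 2 * c ^ 2 * ‖u‖ ^ 2‖ * ‖z‖ := by
        rw [← norm_smul, ← norm_smul]
        exact norm_add_le _ _
    _ ≤ 4 * c ^ 2 * ‖z‖ * 1 + 10 * c ^ 2 * ‖z‖ := by gcongr
    _ = 14 * ‖z‖ * c ^ 2 := by ring

end InnerProductSpace

/-- `‖ψ''(z)(u, u)‖ ≤ 14‖z‖/(1 + ‖z‖²)²` for the taming map `ψ` and all `u` with `‖u‖ ≤ 1`. -/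
theorem tamingMap_second_fderiv_bound_div (d : ℕ) (z u : EuclideanSpace ℝ (Fin d))
    (hu : ‖u‖ ≤ 1) :
    ‖fderiv ℝ (fderiv ℝ (tamingMap d)) z u u‖ ≤ 14 * ‖z‖ / (1 + ‖z‖ ^ 2) ^ 2 := by
  have h : fderiv ℝ (tamingMap d) = tamingFDeriv := funext fun z => (hasFDerivAt_taming z).fderiv
  rw [h]
  exact norm_fderiv_tamingFDeriv_apply_apply_le z hu
end

section
/- Let d, m ∈ ℕ, let ψ : ℝ^d → ℝ^d be the taming map ψ(v) = v/(1 + ‖v‖²), let φ : ℝ^d → ℝ and let σ be a map from ℝ^d into the linear maps ℝ^m → ℝ^d satisfying ‖σ(a) − σ(b)‖_HS ≤ (φ(a) + φ(b))·‖a − b‖ for all a, b ∈ ℝ^d. Let y, z ∈ ℝ^d and set w = y + ψ(z). Then ‖ψ'(z) ∘ σ(y) − σ(w)‖_HS ≤ ‖z‖·( 3‖σ(y)‖_HS + |φ(w) + φ(y)| ). -/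
/-- The Hilbert–Schmidt (Frobenius) norm of a linear map `ℝ^m → ℝ^d`, computed via the
standard orthonormal basis of `ℝ^m`. -/
noncomputable def hsNorm {m d : ℕ}
    (S : EuclideanSpace ℝ (Fin m) →L[ℝ] EuclideanSpace ℝ (Fin d)) : ℝ :=
  Real.sqrt (∑ j : Fin m, ‖S (EuclideanSpace.single j (1 : ℝ))‖ ^ 2)

lemma sq_div_one_add_sq_le {t : ℝ} (ht : 0 ≤ t) : t ^ 2 / (1 + t ^ 2) ≤ t := by
  rw [div_le_iff₀ (by positivity)]
  nlinarith [two_mul_le_add_sq t 1]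

section Taming

variable {E : Type*} [NormedAddCommGroup E] [InnerProductSpace ℝ E]

lemma norm_inv_one_add_norm_sq_smul_le (v : E) : ‖(1 + ‖v‖ ^ 2)⁻¹ • v‖ ≤ ‖v‖ := by
  rw [norm_smul, Real.norm_of_nonneg (by positivity)]
  exact mul_le_of_le_one_left (norm_nonneg v) (inv_le_one_of_one_le₀ (by simp))

lemma hasFDerivAt_inv_one_add_norm_sq_smul (z : E) :
    HasFDerivAt (fun v : E => (1 + ‖v‖ ^ 2)⁻¹ • v)
      ((1 + ‖z‖ ^ 2)⁻¹ • ContinuousLinearMap.id ℝ E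
        - (2 / (1 + ‖z‖ ^ 2) ^ 2) • (innerSL ℝ z).smulRight z) z := by
  have hden : HasFDerivAt (fun v : E => 1 + ‖v‖ ^ 2) (2 • innerSL ℝ z) z := by
    simpa using ((hasFDerivAt_id z).norm_sq).const_add (1 : ℝ)
  have hinv := (hasDerivAt_inv (x := 1 + ‖z‖ ^ 2) (by positivity)).comp_hasFDerivAt z hden
  convert hinv.smul (hasFDerivAt_id z) using 1
  · ext v
    simp
  · ext h
    simp only [sub_apply, add_apply, smul_apply, ContinuousLinearMap.id_apply,
      ContinuousLinearMap.smulRight_apply, coe_innerSL_apply, Function.comp_apply, id_eq,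
      smul_smul]
    module

lemma norm_fderiv_inv_one_add_norm_sq_smul_sub_id_le (z : E) :
    ‖fderiv ℝ (fun v : E => (1 + ‖v‖ ^ 2)⁻¹ • v) z - ContinuousLinearMap.id ℝ E‖ ≤ 3 * ‖z‖ := by
  rw [(hasFDerivAt_inv_one_add_norm_sq_smul z).fderiv]
  set q := ‖z‖ ^ 2 with hq
  have hq0 : 0 ≤ q := by positivity
  have hqz : q / (1 + q) ≤ ‖z‖ := sq_div_one_add_sq_le (norm_nonneg z)
  have hinv : (1 + q)⁻¹ = 1 - q / (1 + q) := by field_simp; ring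
  have hsplit : (1 + q)⁻¹ • ContinuousLinearMap.id ℝ E
        - (2 / (1 + q) ^ 2) • (innerSL ℝ z).smulRight z - ContinuousLinearMap.id ℝ E
      = -(q / (1 + q)) • ContinuousLinearMap.id ℝ E
        - (2 / (1 + q) ^ 2) • (innerSL ℝ z).smulRight z := by
    rw [hinv]; module
  have hproj : ‖(innerSL ℝ z).smulRight z‖ = q := by
    rw [ContinuousLinearMap.norm_smulRight_apply, innerSL_apply_norm, hq, sq]
  have hcoef : 2 / (1 + q) ^ 2 * q ≤ 2 * (q / (1 + q)) := by
    rw [div_mul_eq_mul_div, mul_div_assoc]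
    gcongr
    nlinarith
  rw [hsplit]
  calc _ ≤ ‖-(q / (1 + q)) • ContinuousLinearMap.id ℝ E‖
        + ‖(2 / (1 + q) ^ 2) • (innerSL ℝ z).smulRight z‖ := norm_sub_le _ _
    _ ≤ q / (1 + q) * 1 + 2 / (1 + q) ^ 2 * q := by
        rw [norm_smul, norm_smul, hproj, norm_neg, Real.norm_of_nonneg (by positivity),
          Real.norm_of_nonneg (by positivity)]
        gcongr
        exact ContinuousLinearMap.norm_id_le
    _ ≤ 3 * ‖z‖ := by linarith

end Taming

section HilbertSchmidt

variable {m d d' : ℕ}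

noncomputable def hsColumns (S : EuclideanSpace ℝ (Fin m) →L[ℝ] EuclideanSpace ℝ (Fin d)) :
    PiLp 2 fun _ : Fin m => EuclideanSpace ℝ (Fin d) :=
  WithLp.toLp 2 fun j => S (EuclideanSpace.single j 1)

lemma hsNorm_eq_norm_hsColumns (S : EuclideanSpace ℝ (Fin m) →L[ℝ] EuclideanSpace ℝ (Fin d)) :
    hsNorm S = ‖hsColumns S‖ := by
  rw [hsNorm, hsColumns, PiLp.norm_eq_of_L2]

lemma hsColumns_add (S T : EuclideanSpace ℝ (Fin m) →L[ℝ] EuclideanSpace ℝ (Fin d)) :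
    hsColumns (S + T) = hsColumns S + hsColumns T :=
  rfl

lemma hsNorm_add_le (S T : EuclideanSpace ℝ (Fin m) →L[ℝ] EuclideanSpace ℝ (Fin d)) :
    hsNorm (S + T) ≤ hsNorm S + hsNorm T := by
  simp only [hsNorm_eq_norm_hsColumns, hsColumns_add]
  exact norm_add_le _ _

lemma hsNorm_comp_le (A : EuclideanSpace ℝ (Fin d) →L[ℝ] EuclideanSpace ℝ (Fin d'))
    (S : EuclideanSpace ℝ (Fin m) →L[ℝ] EuclideanSpace ℝ (Fin d)) :
    hsNorm (A.comp S) ≤ ‖A‖ * hsNorm S := by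
  rw [hsNorm, hsNorm, ← Real.sqrt_sq (norm_nonneg A), ← Real.sqrt_mul (sq_nonneg _),
    Finset.mul_sum]
  gcongr with j
  rw [← mul_pow]
  exact pow_le_pow_left₀ (norm_nonneg _) (A.le_opNorm _) 2

end HilbertSchmidt

/-- The local diffusion error of the tamed scheme: if `σ` satisfies the Lipschitz-type
estimate with weight `φ` in the Hilbert–Schmidt norm and `w = y + ψ(z)`, then
`‖ψ'(z) ∘ σ(y) − σ(w)‖_HS ≤ ‖z‖ (3‖σ(y)‖_HS + |φ(w) + φ(y)|)`. -/
theorem tamed_diffusion_local_error (d m : ℕ)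
    (φ : EuclideanSpace ℝ (Fin d) → ℝ)
    (σ : EuclideanSpace ℝ (Fin d) →
      (EuclideanSpace ℝ (Fin m) →L[ℝ] EuclideanSpace ℝ (Fin d)))
    (hσ : ∀ a b : EuclideanSpace ℝ (Fin d), hsNorm (σ a - σ b) ≤ (φ a + φ b) * ‖a - b‖)
    (y z : EuclideanSpace ℝ (Fin d))
    (w : EuclideanSpace ℝ (Fin d)) (hw : w = y + tamingMap d z) :
    hsNorm ((fderiv ℝ (tamingMap d) z).comp (σ y) - σ w)
      ≤ ‖z‖ * (3 * hsNorm (σ y) + |φ w + φ y|) := by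
  set ψ' := fderiv ℝ (tamingMap d) z
  have hsplit : ψ'.comp (σ y) - σ w
      = (ψ' - ContinuousLinearMap.id ℝ _).comp (σ y) + (σ y - σ w) := by
    rw [ContinuousLinearMap.sub_comp, ContinuousLinearMap.id_comp]
    abel
  have hψ' : ‖ψ' - ContinuousLinearMap.id ℝ _‖ ≤ 3 * ‖z‖ :=
    norm_fderiv_inv_one_add_norm_sq_smul_sub_id_le z
  have hyw : ‖y - w‖ ≤ ‖z‖ := by
    rw [hw, sub_add_cancel_left, norm_neg]
    exact norm_inv_one_add_norm_sq_smul_le z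
  have hφ : φ y + φ w ≤ |φ w + φ y| := add_comm (φ w) (φ y) ▸ le_abs_self _
  calc hsNorm (ψ'.comp (σ y) - σ w)
      ≤ ‖ψ' - ContinuousLinearMap.id ℝ _‖ * hsNorm (σ y) + hsNorm (σ y - σ w) := by
        rw [hsplit]
        exact (hsNorm_add_le _ _).trans (add_le_add_left (hsNorm_comp_le _ _) _)
    _ ≤ 3 * ‖z‖ * hsNorm (σ y) + |φ w + φ y| * ‖z‖ := by
        gcongr
        · exact Real.sqrt_nonneg _
        · exact (hσ y w).trans (mul_le_mul hφ hyw (norm_nonneg _) (abs_nonneg _))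
    _ = ‖z‖ * (3 * hsNorm (σ y) + |φ w + φ y|) := by ring
end
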